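/- arXiv:1406.0865 — 2 statements merged into one kernel-verified Lean document; each statement's English description precedes it below -/
import Mathlib

section
/- Let ℓ be a positive integer, and for d ∈ {1,2,3} set ℓ_d = ℓ / gcd(ℓ, 2d). For the A₂ case with equal d ∈ {1,2}: the rational number (ℓ_d · ℓ_d · d)/ℓ is an integer if and only if ℓ ≢ 2d mod 4d; more precisely, if 2d ∣ ℓ but 4d ∤ ℓ then (ℓ_d² · d)/ℓ ∈ ℤ + 1/2, and otherwise it is an integer. -/
/-- Type `A₂` off-diagonal lattice computation: for `d ∈ {1,2}` and
`ℓ_d = ℓ / gcd(ℓ, 2d)`, the rational `d·ℓ_d²/ℓ` is an integer iff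
`ℓ ≢ 2d (mod 4d)`; more precisely if `2d ∣ ℓ` and `4d ∤ ℓ` it lies in
`ℤ + 1/2`, and otherwise it is an integer. -/
theorem A2_lattice_pairing
    (ℓ d : ℕ) (hℓ : 0 < ℓ) (hd : d = 1 ∨ d = 2) :
    ((∃ n : ℤ, ((d : ℚ) * (ℓ / Nat.gcd ℓ (2 * d) : ℕ) ^ 2) / (ℓ : ℚ) = n) ↔
        ¬ (ℓ % (4 * d) = 2 * d)) ∧
    ((2 * d ∣ ℓ ∧ ¬ (4 * d ∣ ℓ)) →
        ∃ n : ℤ, ((d : ℚ) * (ℓ / Nat.gcd ℓ (2 * d) : ℕ) ^ 2) / (ℓ : ℚ) = n + 1/2) ∧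
    (¬ (2 * d ∣ ℓ ∧ ¬ (4 * d ∣ ℓ)) →
        ∃ n : ℤ, ((d : ℚ) * (ℓ / Nat.gcd ℓ (2 * d) : ℕ) ^ 2) / (ℓ : ℚ) = n) := by
  have hgl : Nat.gcd ℓ (2 * d) ∣ ℓ := Nat.gcd_dvd_left _ _
  have hgr : Nat.gcd ℓ (2 * d) ∣ 2 * d := Nat.gcd_dvd_right _ _
  have hg0 : 0 < Nat.gcd ℓ (2 * d) := Nat.gcd_pos_of_pos_left _ hℓ
  set g := Nat.gcd ℓ (2 * d) with hgdef
  set m := ℓ / g with hmdef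
  have hdg : ∀ k : ℕ, k ∣ ℓ → k ∣ 2 * d → k ∣ g := fun k h1 h2 => Nat.dvd_gcd h1 h2
  have hlm : ℓ = g * m := (Nat.mul_div_cancel' hgl).symm
  have hm0 : 0 < m := Nat.div_pos (Nat.le_of_dvd hℓ hgl) hg0
  have hcop : Nat.Coprime m (2 * d / g) := Nat.coprime_div_gcd_div_gcd hg0
  have hmQ : (m : ℚ) ≠ 0 := by exact_mod_cast hm0.ne'
  have hgQ : (g : ℚ) ≠ 0 := by exact_mod_cast hg0.ne'
  have key : ((d : ℚ) * (m : ℚ) ^ 2) / (ℓ : ℚ) = (d : ℚ) * (m : ℚ) / (g : ℚ) := by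
    have hlQ : (ℓ : ℚ) = (g : ℚ) * (m : ℚ) := by exact_mod_cast hlm
    rw [hlQ]; field_simp; try ring
  rw [key]
  clear_value m g
  clear hmdef hgl hmQ key
  rcases hd with rfl | rfl
  · -- d = 1
    have hg12 : g = 1 ∨ g = 2 := (Nat.dvd_prime Nat.prime_two).mp (by simpa using hgr)
    rcases hg12 with rfl | rfl
    · -- g = 1, ℓ = m, ℓ odd
      have hodd : ¬ (2 ∣ ℓ) := fun h => by
        have := hdg 2 h (by norm_num); omega
      refine ⟨⟨fun _ => by omega, fun _ => ⟨m, by push_cast; norm_num⟩⟩,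
        ?_, fun _ => ⟨m, by push_cast; norm_num⟩⟩
      rintro ⟨h1, -⟩
      exact absurd h1 (by omega)
    · -- g = 2, ℓ = 2m
      rcases Nat.even_or_odd m with ⟨k, hk⟩ | ⟨k, hk⟩
      · have hint : ∃ n : ℤ, (1 : ℚ) * (m : ℚ) / (2 : ℕ) = n := by
          refine ⟨k, ?_⟩; subst hk; push_cast; field_simp; try ring
        refine ⟨⟨fun _ => by omega, fun _ => hint⟩, ?_, fun _ => hint⟩
        rintro ⟨h1, h2⟩
        exact absurd (by omega : (4:ℕ) ∣ ℓ) h2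
      · have hhalf : (1 : ℚ) * (m : ℚ) / ((2:ℕ) : ℚ) = (k : ℤ) + 1/2 := by
          subst hk; push_cast; field_simp; try ring
        refine ⟨⟨?_, fun h => absurd (by omega : ℓ % 4 = 2) h⟩,
          fun _ => ⟨k, hhalf⟩, fun h => absurd ⟨⟨m, hlm⟩, by omega⟩ h⟩
        rintro ⟨n, hn⟩
        exfalso
        have h1 : (m : ℚ) = 2 * n := by
          push_cast at hn; field_simp at hn; linarith
        have h2 : (m : ℤ) = 2 * n := by exact_mod_cast h1
        omega
  · -- d = 2
    have hle : g ≤ 4 := Nat.le_of_dvd (by norm_num) (by simpa using hgr)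
    have hg4 : g ∣ 4 := by simpa using hgr
    interval_cases g
    · -- g = 1, ℓ odd
      have hodd : ¬ (2 ∣ ℓ) := fun h => by
        have := hdg 2 h (by norm_num); omega
      refine ⟨⟨fun _ => by omega, fun _ => ⟨2 * m, by push_cast; norm_num⟩⟩,
        ?_, fun _ => ⟨2 * m, by push_cast; norm_num⟩⟩
      rintro ⟨h1, -⟩
      exact absurd h1 (by omega)
    · -- g = 2, m odd
      have hmodd : ¬ (2 ∣ m) := fun h => by
        have := Nat.Coprime.eq_one_of_dvd (Nat.Coprime.symm (by simpa using hcop)) h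
        omega
      have hint : ∃ n : ℤ, (2 : ℚ) * (m : ℚ) / ((2:ℕ) : ℚ) = n := by
        refine ⟨m, ?_⟩; push_cast; field_simp
      refine ⟨⟨fun _ => by omega, fun _ => hint⟩, ?_, fun _ => hint⟩
      rintro ⟨h1, h2⟩; omega
    · exact absurd hg4 (by norm_num)
    · -- g = 4, ℓ = 4m
      rcases Nat.even_or_odd m with ⟨k, hk⟩ | ⟨k, hk⟩
      · have hint : ∃ n : ℤ, (2 : ℚ) * (m : ℚ) / ((4:ℕ) : ℚ) = n := by
          refine ⟨k, ?_⟩; subst hk; push_cast; field_simp; try ring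
        refine ⟨⟨fun _ => by omega, fun _ => hint⟩,
          ?_, fun _ => hint⟩
        rintro ⟨h1, h2⟩
        exact absurd (by omega : (8:ℕ) ∣ ℓ) h2
      · have hhalf : (2 : ℚ) * (m : ℚ) / ((4:ℕ) : ℚ) = (k : ℤ) + 1/2 := by
          subst hk; push_cast; field_simp; try ring
        refine ⟨⟨?_, fun h => absurd (by omega : ℓ % 8 = 4) h⟩,
          fun _ => ⟨k, hhalf⟩, fun h => absurd ⟨⟨m, by omega⟩, by omega⟩ h⟩
        rintro ⟨n, hn⟩
        exfalso
        have h1 : 2 * (m : ℚ) = 4 * n := by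
          push_cast at hn; field_simp at hn; linarith
        have h2 : 2 * (m : ℤ) = 4 * n := by exact_mod_cast h1
        omega
end

section
/- In the root system G₂ with short simple root α₁ and long simple root α₂ (so (α₁,α₁)=2, (α₂,α₂)=6, (α₁,α₂)=−3), the three roots β₁ = α₂, β₂ = α₁, β₃ = 2α₁+α₂ satisfy: (β_k, β_k) ∈ {2,6} with q^{(β_k,β_k)} = −1 for q a primitive 4th root of unity, and the braiding matrix q^{(β_j,β_k)} equals the braiding matrix of type A₃ for the conjugate root of unity q̄; explicitly (β₁,β₂) = −3, (β₂,β₃) = 1, (β₁,β₃) = 0, so that q^{(β₁,β₂)} = q̄^{−1}, q^{(β₂,β₃)} = q̄^{−1}, q^{(β₁,β₃)} = 1 when q² = −1. -/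
/-- In `G₂` with short simple root `α₁` and long simple root `α₂`, the three
roots `β₁ = α₂`, `β₂ = α₁`, `β₃ = 2α₁+α₂` have self-pairings in `{2,6}`
(so `q^{(β,β)} = −1` for `q` a primitive fourth root of unity), pairings
`(β₁,β₂) = −3`, `(β₂,β₃) = 1`, `(β₁,β₃) = 0`, and the braiding matrix
`q^{(βⱼ,βₖ)}` equals the `A₃` braiding matrix at the conjugate root `q̄`. -/
theorem G2_exotic_A3_braiding
    {V : Type*} [AddCommGroup V] [Module ℝ V]
    (B : V →ₗ[ℝ] V →ₗ[ℝ] ℝ) (α₁ α₂ : V)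
    (hsymm : ∀ x y, B x y = B y x)
    (h11 : B α₁ α₁ = 2) (h22 : B α₂ α₂ = 6) (h12 : B α₁ α₂ = -3)
    (q : ℂ) (hq : q ^ 2 = -1) :
    B α₂ α₂ = 6 ∧ B α₁ α₁ = 2 ∧
    B ((2 : ℝ) • α₁ + α₂) ((2 : ℝ) • α₁ + α₂) = 2 ∧
    B α₂ α₁ = -3 ∧
    B α₁ ((2 : ℝ) • α₁ + α₂) = 1 ∧
    B α₂ ((2 : ℝ) • α₁ + α₂) = 0 ∧
    q ^ (6 : ℕ) = -1 ∧ q ^ (2 : ℕ) = -1 ∧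
    q ^ (-3 : ℤ) = (q⁻¹) ^ (-1 : ℤ) ∧
    q ^ (1 : ℤ) = (q⁻¹) ^ (-1 : ℤ) ∧
    q ^ (0 : ℤ) = 1 := by
  have h21 : B α₂ α₁ = -3 := by rw [hsymm]; exact h12
  have hq0 : q ≠ 0 := by
    intro h; rw [h] at hq; norm_num at hq
  have hq4 : q ^ 4 = 1 := by
    have : q ^ 4 = (q ^ 2) ^ 2 := by ring
    rw [this, hq]; norm_num
  refine ⟨h22, h11, ?_, h21, ?_, ?_, ?_, hq, ?_, ?_, ?_⟩
  · simp [map_add, map_smul, h11, h22, h12, h21]; ring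
  · simp [map_add, map_smul, h11, h12]; ring
  · simp [map_add, map_smul, h21, h22]; ring
  · have : q ^ 6 = (q ^ 2) ^ 3 := by ring
    rw [this, hq]; norm_num
  · have hinv : (q⁻¹) ^ (-1 : ℤ) = q := by
      rw [zpow_neg_one, inv_inv]
    rw [hinv]
    have : q ^ (-3 : ℤ) * q ^ (4 : ℤ) = q ^ (1 : ℤ) := by
      rw [← zpow_add₀ hq0]; norm_num
    have h4 : q ^ (4 : ℤ) = 1 := by exact_mod_cast hq4
    rw [h4, mul_one, zpow_one] at this
    exact this
  · rw [zpow_neg_one, inv_inv, zpow_one]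
  · exact zpow_zero q
end
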